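/- arXiv:1102.0203 — 6 statements merged into one kernel-verified Lean document; each statement's English description precedes it below -/
import Mathlib

section
/- Let G be a finite strategic game and let G' be obtained from G by an iterated elimination of strictly dominated strategies (finitely many →_S steps). If s is a Nash equilibrium of G', then s is a Nash equilibrium of G. -/
variable {ι : Type*} {S : ι → Type*}

/-- `si` is strictly dominated by `si'` in the restriction `R`. -/
def StrictlyDominatedIn [DecidableEq ι] (p : ι → (∀ i, S i) → ℝ)
    (R : ∀ i, Set (S i)) (i : ι) (si si' : S i) : Prop :=
  ∀ t : ∀ j, S j, (∀ j, t j ∈ R j) →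
    p i (Function.update t i si') > p i (Function.update t i si)

/-- One step of elimination of strictly dominated strategies: `R →_S R'`. -/
def StepS [DecidableEq ι] (p : ι → (∀ i, S i) → ℝ) (R R' : ∀ i, Set (S i)) : Prop :=
  R ≠ R' ∧ (∀ i, R' i ⊆ R i) ∧
    ∀ i, ∀ si ∈ R i, si ∉ R' i → ∃ si' ∈ R i, StrictlyDominatedIn p R i si si'

/-- `s` is a Nash equilibrium of the restriction `R`. -/
def NashOn [DecidableEq ι] (p : ι → (∀ i, S i) → ℝ) (R : ∀ i, Set (S i))
    (s : ∀ i, S i) : Prop :=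
  (∀ i, s i ∈ R i) ∧ ∀ i, ∀ si' ∈ R i, p i s ≥ p i (Function.update s i si')

/-! A best response to `s` within `R i` cannot be strictly dominated in `R`, since `s` itself is
a profile of `R`; so a best response always survives a step of elimination. Hence every deviation
available in `R` is matched by a surviving best response, against which the equilibrium of the
smaller game is already stable. -/

theorem StepS.mem_of_isMaxOn [DecidableEq ι] {p : ι → (∀ i, S i) → ℝ} {R R' : ∀ i, Set (S i)}
    (hstep : StepS p R R') {s : ∀ i, S i} (hs : ∀ j, s j ∈ R j) {i : ι} {m : S i}
    (hm : m ∈ R i) (hmax : IsMaxOn (fun x => p i (Function.update s i x)) (R i) m) :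
    m ∈ R' i := by
  by_contra hm'
  obtain ⟨d, hd, hdom⟩ := hstep.2.2 i m hm hm'
  exact (hdom s hs).not_ge (hmax hd)

theorem NashOn.of_stepS [DecidableEq ι] [∀ i, Finite (S i)] {p : ι → (∀ i, S i) → ℝ}
    {R R' : ∀ i, Set (S i)} (hstep : StepS p R R') {s : ∀ i, S i} (hs : NashOn p R' s) :
    NashOn p R s := by
  have hsR : ∀ j, s j ∈ R j := fun j => hstep.2.1 j (hs.1 j)
  refine ⟨hsR, fun i si' hsi' => ?_⟩
  obtain ⟨m, hm, hmax⟩ := Set.exists_max_image (R i) (fun x => p i (Function.update s i x))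
    (Set.toFinite _) ⟨si', hsi'⟩
  calc p i (Function.update s i si') ≤ p i (Function.update s i m) := hmax si' hsi'
    _ ≤ p i s := hs.2 i m (hstep.mem_of_isMaxOn hsR hm hmax)

theorem stmt2_general [DecidableEq ι] [∀ i, Fintype (S i)]
    (p : ι → (∀ i, S i) → ℝ) (R : ∀ i, Set (S i))
    (hreach : Relation.ReflTransGen (StepS p) (fun i => (Set.univ : Set (S i))) R)
    (s : ∀ i, S i) (hs : NashOn p R s) :
    NashOn p (fun i => (Set.univ : Set (S i))) s := by
  induction hreach with
  | refl => exact hs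
  | tail _ hstep ih => exact ih (hs.of_stepS hstep)

/-- If the finite game `G` reduces by iterated elimination of strictly dominated
strategies to `G'` and `s` is a Nash equilibrium of `G'`, then `s` is a Nash
equilibrium of `G`. -/
theorem stmt2 [DecidableEq ι] [Fintype ι] [∀ i, Fintype (S i)] [∀ i, Nonempty (S i)]
    (p : ι → (∀ i, S i) → ℝ) (R : ∀ i, Set (S i))
    (hreach : Relation.ReflTransGen (StepS p) (fun i => (Set.univ : Set (S i))) R)
    (s : ∀ i, S i) (hs : NashOn p R s) :
    NashOn p (fun i => (Set.univ : Set (S i))) s :=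
  stmt2_general p R hreach s hs
end

section
/- Let G be a finite strategic game and let G' be obtained from G by an iterated elimination of weakly dominated strategies. If s is a Nash equilibrium of G', then s is a Nash equilibrium of G. -/
variable {ι : Type*} {S : ι → Type*}

/-- `si` is weakly dominated by `si'` in the restriction `R`. -/
def WeaklyDominatedIn [DecidableEq ι] (p : ι → (∀ i, S i) → ℝ)
    (R : ∀ i, Set (S i)) (i : ι) (si si' : S i) : Prop :=
  (∀ t : ∀ j, S j, (∀ j, t j ∈ R j) →
      p i (Function.update t i si') ≥ p i (Function.update t i si)) ∧
    ∃ t : ∀ j, S j, (∀ j, t j ∈ R j) ∧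
      p i (Function.update t i si') > p i (Function.update t i si)

/-- One step of elimination of weakly dominated strategies: `R →_W R'`. -/
def StepW [DecidableEq ι] (p : ι → (∀ i, S i) → ℝ) (R R' : ∀ i, Set (S i)) : Prop :=
  R ≠ R' ∧ (∀ i, R' i ⊆ R i) ∧
    ∀ i, ∀ si ∈ R i, si ∉ R' i → ∃ si' ∈ R i, WeaklyDominatedIn p R i si si'

/-!
Removing weakly dominated strategies cannot create a profitable deviation: every removed
strategy of player `i` is weakly dominated, and following dominators upwards (weak
dominance is a strict order on the finite set `S i`) ends at a surviving strategy that
does at least as well against every remaining profile. A deviation to the removed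
strategy is then no better than the deviation to the survivor, which the equilibrium
of the reduced game already rules out.
-/

section Elimination

variable [DecidableEq ι] {p : ι → (∀ i, S i) → ℝ} {R R' : ∀ i, Set (S i)} {i : ι}

theorem WeaklyDominatedIn.trans {a b c : S i} (hab : WeaklyDominatedIn p R i a b)
    (hbc : WeaklyDominatedIn p R i b c) : WeaklyDominatedIn p R i a c := by
  obtain ⟨t, ht, hlt⟩ := hab.2
  exact ⟨fun u hu => (hab.1 u hu).trans (hbc.1 u hu), t, ht, hlt.trans_le (hbc.1 t ht)⟩

theorem WeaklyDominatedIn.irrefl (a : S i) : ¬ WeaklyDominatedIn p R i a a := by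
  rintro ⟨-, t, -, hlt⟩
  exact hlt.false

theorem wellFounded_flip_weaklyDominatedIn [Finite (S i)] :
    WellFounded (flip (WeaklyDominatedIn p R i)) :=
  @Finite.wellFounded_of_trans_of_irrefl _ _ _
    ⟨fun _ _ _ hba hcb => hcb.trans hba⟩ ⟨WeaklyDominatedIn.irrefl⟩

theorem StepW.exists_survivor_ge [Finite (S i)] (hstep : StepW p R R') {si : S i}
    (hsi : si ∈ R i) :
    ∃ si' ∈ R' i, ∀ t : ∀ j, S j, (∀ j, t j ∈ R j) →
      p i (Function.update t i si) ≤ p i (Function.update t i si') := by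
  let better : Set (S i) := {x | x ∈ R i ∧ ∀ t : ∀ j, S j, (∀ j, t j ∈ R j) →
    p i (Function.update t i si) ≤ p i (Function.update t i x)}
  obtain ⟨x, ⟨hxR, hx⟩, hmax⟩ :=
    wellFounded_flip_weaklyDominatedIn.has_min better ⟨si, hsi, fun _ _ => le_rfl⟩
  refine ⟨x, ?_, hx⟩
  by_contra hxR'
  obtain ⟨y, hyR, hxy⟩ := hstep.2.2 i x hxR hxR'
  exact hmax y ⟨hyR, fun t ht => (hx t ht).trans (hxy.1 t ht)⟩ hxy

theorem NashOn.of_stepW [∀ i, Finite (S i)] (hstep : StepW p R R') {s : ∀ i, S i}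
    (hs : NashOn p R' s) : NashOn p R s := by
  have hsR : ∀ j, s j ∈ R j := fun j => hstep.2.1 j (hs.1 j)
  refine ⟨hsR, fun i si hsi => ?_⟩
  obtain ⟨si', hsi', hge⟩ := hstep.exists_survivor_ge hsi
  calc p i (Function.update s i si) ≤ p i (Function.update s i si') := hge s hsR
    _ ≤ p i s := hs.2 i si' hsi'

theorem NashOn.of_reflTransGen_stepW [∀ i, Finite (S i)]
    (h : Relation.ReflTransGen (StepW p) R R') {s : ∀ i, S i} (hs : NashOn p R' s) :
    NashOn p R s := by
  induction h using Relation.ReflTransGen.head_induction_on with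
  | refl => exact hs
  | head hstep _ ih => exact ih.of_stepW hstep

end Elimination

theorem stmt4_general [DecidableEq ι] [∀ i, Fintype (S i)]
    (p : ι → (∀ i, S i) → ℝ) (R : ∀ i, Set (S i))
    (hreach : Relation.ReflTransGen (StepW p) (fun i => (Set.univ : Set (S i))) R)
    (s : ∀ i, S i) (hs : NashOn p R s) :
    NashOn p (fun i => (Set.univ : Set (S i))) s :=
  hs.of_reflTransGen_stepW hreach

/-- If the finite game `G` reduces by iterated elimination of weakly dominated
strategies to `G'` and `s` is a Nash equilibrium of `G'`, then `s` is a Nash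
equilibrium of `G`. -/
theorem stmt4 [DecidableEq ι] [Fintype ι] [∀ i, Fintype (S i)] [∀ i, Nonempty (S i)]
    (p : ι → (∀ i, S i) → ℝ) (R : ∀ i, Set (S i))
    (hreach : Relation.ReflTransGen (StepW p) (fun i => (Set.univ : Set (S i))) R)
    (s : ∀ i, S i) (hs : NashOn p R s) :
    NashOn p (fun i => (Set.univ : Set (S i))) s :=
  stmt4_general p R hreach s hs
end

section
/- Let G be a strategic game and G' a restriction obtained from G by one step of elimination of never best responses. Then every Nash equilibrium of G is a Nash equilibrium of G', and conversely, if G is finite and s is a Nash equilibrium of G', then s is a Nash equilibrium of G. -/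
variable {ι : Type*} {S : ι → Type*}

/-- `si` is a best response in the restriction `R` to the joint strategy `t` of the
opponents (the `i`-th component of `t` is irrelevant). -/
def BestResponseIn [DecidableEq ι] (p : ι → (∀ i, S i) → ℝ)
    (R : ∀ i, Set (S i)) (i : ι) (si : S i) (t : ∀ j, S j) : Prop :=
  ∀ si' ∈ R i, p i (Function.update t i si) ≥ p i (Function.update t i si')

/-- One step of elimination of never best responses: `R →_N R'`. -/
def StepN [DecidableEq ι] (p : ι → (∀ i, S i) → ℝ) (R R' : ∀ i, Set (S i)) : Prop :=
  R ≠ R' ∧ (∀ i, R' i ⊆ R i) ∧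
    ∀ i, ∀ si ∈ R i, si ∉ R' i →
      ¬ ∃ t : ∀ j, S j, (∀ j, t j ∈ R j) ∧ BestResponseIn p R i si t

section

variable [DecidableEq ι] {p : ι → (∀ i, S i) → ℝ} {R R' : ∀ i, Set (S i)}

theorem StepN.mem_of_bestResponseIn (h : StepN p R R') {i : ι} {si : S i} (hsi : si ∈ R i)
    {t : ∀ j, S j} (ht : ∀ j, t j ∈ R j) (hbr : BestResponseIn p R i si t) : si ∈ R' i := by
  by_contra hsi'
  exact h.2.2 i si hsi hsi' ⟨t, ht, hbr⟩

theorem NashOn.bestResponseIn_self {s : ∀ i, S i} (hs : NashOn p R s) (i : ι) :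
    BestResponseIn p R i (s i) s := by
  intro si' hsi'
  rw [Function.update_eq_self]
  exact hs.2 i si' hsi'

theorem exists_bestResponseIn_of_finite {i : ι} (hfin : (R i).Finite) (hne : (R i).Nonempty)
    (t : ∀ j, S j) : ∃ si ∈ R i, BestResponseIn p R i si t :=
  Set.exists_max_image (R i) (fun x => p i (Function.update t i x)) hfin hne

theorem StepN.nashOn_of_nashOn (h : StepN p R R') {s : ∀ i, S i} (hs : NashOn p R s) :
    NashOn p R' s :=
  ⟨fun i => h.mem_of_bestResponseIn (hs.1 i) hs.1 (hs.bestResponseIn_self i),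
    fun i si' hsi' => hs.2 i si' (h.2.1 i hsi')⟩

/-- A deviation `si'` is at most as good as a best response `sm` to `s` in `R`; the step keeps
`sm`, so the Nash property in `R'` bounds its payoff by that of `s`. -/
theorem StepN.nashOn_of_nashOn_of_finite (h : StepN p R R') (hfin : ∀ i, (R i).Finite)
    {s : ∀ i, S i} (hs : NashOn p R' s) : NashOn p R s := by
  have hsR : ∀ j, s j ∈ R j := fun j => h.2.1 j (hs.1 j)
  refine ⟨hsR, fun i si' hsi' => ?_⟩
  obtain ⟨sm, hsmR, hsm⟩ := exists_bestResponseIn_of_finite (p := p) (hfin i) ⟨s i, hsR i⟩ s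
  have hsmR' : sm ∈ R' i := h.mem_of_bestResponseIn hsmR hsR hsm
  calc p i (Function.update s i si') ≤ p i (Function.update s i sm) := hsm si' hsi'
    _ ≤ p i s := hs.2 i sm hsmR'

end

/-- If `G'` results from `G` by one step of elimination of never best responses,
then every Nash equilibrium of `G` is a Nash equilibrium of `G'`; conversely, if
`G` is finite, every Nash equilibrium of `G'` is a Nash equilibrium of `G`. -/
theorem stmt6 [DecidableEq ι] (p : ι → (∀ i, S i) → ℝ) (R' : ∀ i, Set (S i))
    (hstep : StepN p (fun i => (Set.univ : Set (S i))) R') (s : ∀ i, S i) :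
    (NashOn p (fun i => (Set.univ : Set (S i))) s → NashOn p R' s) ∧
      ((∀ i, Finite (S i)) → NashOn p R' s →
        NashOn p (fun i => (Set.univ : Set (S i))) s) :=
  ⟨hstep.nashOn_of_nashOn, fun hfin =>
    hstep.nashOn_of_nashOn_of_finite fun i => Set.finite_univ_iff.mpr (hfin i)⟩
end

section
/- In a finite two-player strategic game, if a pure strategy s_i of player i is not strictly dominated by any mixed strategy, then there exists a mixed strategy m_{-i} of the opponent to which s_i is a best response. (Pearce's lemma, via the separating hyperplane theorem.) -/
/-! The payoff vectors `m ᵥ* p₁` of player 1's mixed strategies `m` form a convex set containing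
the row `p₁ s₁`, and non-domination says that this set misses the open orthant above `p₁ s₁`.
A hyperplane separating it from the closed orthant above `p₁ s₁` must pass through `p₁ s₁`, so its
normal is, up to sign, a nonzero nonnegative vector. Normalised, this is a mixed strategy of
player 2 against which no mixed strategy of player 1 earns more than `s₁`. -/

/-- `m` is a probability distribution on the finite type `A`. -/
def IsMixed {A : Type*} [Fintype A] (m : A → ℝ) : Prop :=
  (∀ a, 0 ≤ m a) ∧ ∑ a, m a = 1

open Set Matrix

theorem StrongDual.apply_eq_dotProduct {ι : Type*} [Fintype ι] [DecidableEq ι]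
    (f : StrongDual ℝ (ι → ℝ)) (y : ι → ℝ) : f y = y ⬝ᵥ fun i => f (Pi.single i 1) := by
  conv_lhs => rw [← Finset.univ_sum_single y]
  refine (map_sum f _ _).trans (Finset.sum_congr rfl fun i _ => ?_)
  rw [← smul_eq_mul, ← map_smul, ← Pi.single_smul', smul_eq_mul, mul_one]

theorem exists_pos_dotProduct_le_of_convex {ι : Type*} [Fintype ι] {K : Set (ι → ℝ)}
    (hK : Convex ℝ K) {x : ι → ℝ} (hx : x ∈ K) (hmax : ∀ k ∈ K, ¬ ∀ i, x i < k i) :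
    ∃ w : ι → ℝ, 0 < w ∧ ∀ k ∈ K, w ⬝ᵥ k ≤ w ⬝ᵥ x := by
  classical
  set U : Set (ι → ℝ) := univ.pi fun i => Ici (x i)
  have hint : interior U = univ.pi fun i => Ioi (x i) := by
    rw [interior_pi_set finite_univ]; simp
  have hdisj : Disjoint (interior U) K := by
    rw [hint, disjoint_left]
    exact fun k hk hkK => hmax k hkK fun i => hk i (mem_univ i)
  have hne : (interior U).Nonempty := ⟨x + 1, by rw [hint]; intro i _; simp⟩
  obtain ⟨f, u, hf, hfU, hfK⟩ :=
    geometric_hahn_banach_of_nonempty_interior (convex_pi fun i _ => convex_Ici (x i)) hK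
      hdisj hne ⟨x, hx⟩
  have hfx : f x = u := (hfU x fun i _ => mem_Ici.2 le_rfl).antisymm (hfK x hx)
  set c : ι → ℝ := fun i => f (Pi.single i 1)
  have hfc : ∀ y, f y = y ⬝ᵥ c := f.apply_eq_dotProduct
  have hc : ∀ i, c i ≤ 0 := fun i => by
    have hxi : x + Pi.single i 1 ∈ U := fun j _ => by
      rcases eq_or_ne j i with rfl | hji <;> simp [*]
    simpa [hfx] using hfU _ hxi
  have hc0 : c ≠ 0 := fun h0 =>
    hf (ContinuousLinearMap.ext fun y => by rw [hfc, h0, dotProduct_zero]; rfl)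
  refine ⟨-c, lt_of_le_of_ne (fun i => neg_nonneg.2 (hc i)) (Ne.symm (neg_ne_zero.2 hc0)),
    fun k hk => ?_⟩
  have hck : c ⬝ᵥ x ≤ c ⬝ᵥ k := by
    rw [dotProduct_comm c, dotProduct_comm c, ← hfc, ← hfc, hfx]
    exact hfK k hk
  simpa [neg_dotProduct] using hck

theorem isMixed_inv_sum_smul {A : Type*} [Fintype A] {w : A → ℝ} (hw : 0 < w) :
    IsMixed ((∑ a, w a)⁻¹ • w) := by
  have hsum := Fintype.sum_pos hw
  exact ⟨fun a => mul_nonneg (inv_nonneg.2 hsum.le) (hw.le a), by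
    simp [← Finset.mul_sum, hsum.ne']⟩

theorem exists_isMixed_dotProduct_le_of_convex {ι : Type*} [Fintype ι] {K : Set (ι → ℝ)}
    (hK : Convex ℝ K) {x : ι → ℝ} (hx : x ∈ K) (hmax : ∀ k ∈ K, ¬ ∀ i, x i < k i) :
    ∃ w : ι → ℝ, IsMixed w ∧ ∀ k ∈ K, w ⬝ᵥ k ≤ w ⬝ᵥ x := by
  obtain ⟨w, hw, hwK⟩ := exists_pos_dotProduct_le_of_convex hK hx hmax
  refine ⟨_, isMixed_inv_sum_smul hw, fun k hk => ?_⟩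
  simp only [smul_dotProduct, smul_eq_mul]
  exact mul_le_mul_of_nonneg_left (hwK k hk) (inv_nonneg.2 (Fintype.sum_pos hw).le)

theorem sum_sum_mul_mul_eq_dotProduct_vecMul {A B R : Type*} [Fintype A] [Fintype B]
    [CommSemiring R] (p : Matrix A B R) (m : A → R) (w : B → R) :
    ∑ a, ∑ b, m a * w b * p a b = w ⬝ᵥ (m ᵥ* p) := by
  simp only [dotProduct, vecMul, Finset.mul_sum]
  rw [Finset.sum_comm]
  simp only [mul_left_comm, mul_assoc]

theorem stmt15_general {S₁ S₂ : Type*} [Fintype S₁] [Fintype S₂]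
    (p₁ : S₁ → S₂ → ℝ) (s₁ : S₁)
    (hnd : ∀ m₁ : S₁ → ℝ, IsMixed m₁ → ¬ ∀ b : S₂, (∑ a, m₁ a * p₁ a b) > p₁ s₁ b) :
    ∃ m₂ : S₂ → ℝ, IsMixed m₂ ∧
      ∀ m₁' : S₁ → ℝ, IsMixed m₁' →
        (∑ b, m₂ b * p₁ s₁ b) ≥ ∑ a, ∑ b, m₁' a * m₂ b * p₁ a b := by
  classical
  obtain ⟨m₂, hm₂, hbest⟩ := exists_isMixed_dotProduct_le_of_convex
    ((convex_stdSimplex ℝ S₁).linear_image (vecMulLinear p₁))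
    ⟨Pi.single s₁ 1, single_mem_stdSimplex ℝ s₁, single_one_vecMul s₁ p₁⟩
    (by rintro _ ⟨m₁, hm₁, rfl⟩; exact hnd m₁ hm₁)
  refine ⟨m₂, hm₂, fun m₁ hm₁ => ?_⟩
  exact (sum_sum_mul_mul_eq_dotProduct_vecMul p₁ m₁ m₂).trans_le (hbest _ ⟨m₁, hm₁, rfl⟩)

/-- Pearce's lemma: in a finite two-player game, if a pure strategy `s₁` of
player 1 is not strictly dominated by any mixed strategy, then it is a best
response to some mixed strategy of the opponent. -/
theorem stmt15 {S₁ S₂ : Type*} [Fintype S₁] [Fintype S₂] [Nonempty S₁] [Nonempty S₂]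
    (p₁ : S₁ → S₂ → ℝ) (s₁ : S₁)
    (hnd : ∀ m₁ : S₁ → ℝ, IsMixed m₁ → ¬ ∀ b : S₂, (∑ a, m₁ a * p₁ a b) > p₁ s₁ b) :
    ∃ m₂ : S₂ → ℝ, IsMixed m₂ ∧
      ∀ m₁' : S₁ → ℝ, IsMixed m₁' →
        (∑ b, m₂ b * p₁ s₁ b) ≥ ∑ a, ∑ b, m₁' a * m₂ b * p₁ a b :=
  stmt15_general p₁ s₁ hnd
end

section
/- Groves' theorem: For a decision problem with an efficient decision rule f, every Groves mechanism is incentive compatible; that is, for all joint types θ, every player i, and every reported type θ'_i, u_i((f,t)(θ_i, θ_{-i}), θ_i) ≥ u_i((f,t)(θ'_i, θ_{-i}), θ_i). -/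
/-! Under a Groves tax, player `i`'s true utility from reporting `x` is the total true welfare
of `f (x, θ₋ᵢ)` plus `hᵢ(θ₋ᵢ)`, which does not depend on `x`. Efficiency of `f` says exactly that
the truthful report maximizes the welfare term. -/

open Finset Function

theorem add_sum_erase_update_eq_sum {ι : Type*} [Fintype ι] [DecidableEq ι] {Θ : ι → Type*}
    (g : ∀ i, Θ i → ℝ) (θ : ∀ i, Θ i) (i : ι) (x : Θ i) :
    g i (θ i) + ∑ j ∈ univ.erase i, g j (update θ i x j) = ∑ j, g j (θ j) := by
  have hothers : ∀ j ∈ univ.erase i, g j (update θ i x j) = g j (θ j) := fun j hj => by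
    rw [update_of_ne (ne_of_mem_erase hj)]
  rw [sum_congr rfl hothers]
  exact add_sum_erase _ (fun j => g j (θ j)) (mem_univ i)

theorem groves_utility_eq_welfare_add {ι : Type*} [Fintype ι] [DecidableEq ι] {D : Type*}
    {Θ : ι → Type*} (v : ∀ i, D → Θ i → ℝ) (f : (∀ i, Θ i) → D)
    (h : ι → (∀ j, Θ j) → ℝ)
    (hh : ∀ i (θ θ' : ∀ j, Θ j), (∀ j, j ≠ i → θ j = θ' j) → h i θ = h i θ')
    (t : ι → (∀ j, Θ j) → ℝ)
    (ht : ∀ i θ, t i θ = (∑ j ∈ univ.erase i, v j (f θ) (θ j)) + h i θ)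
    (θ : ∀ i, Θ i) (i : ι) (x : Θ i) :
    v i (f (update θ i x)) (θ i) + t i (update θ i x) =
      ∑ j, v j (f (update θ i x)) (θ j) + h i θ := by
  have hh_update : h i (update θ i x) = h i θ := hh i _ _ fun j hj => update_of_ne hj _ _
  rw [ht, hh_update, ← add_assoc, add_sum_erase_update_eq_sum (fun j => v j _)]

theorem stmt16_general {ι : Type*} [Fintype ι] [DecidableEq ι] {D : Type*}
    {Θ : ι → Type*}
    (v : ∀ i, D → Θ i → ℝ) (f : (∀ i, Θ i) → D)
    (heff : ∀ (θ : ∀ i, Θ i) (d' : D),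
      ∑ i, v i (f θ) (θ i) ≥ ∑ i, v i d' (θ i))
    (h : ∀ _ : ι, (∀ j, Θ j) → ℝ)
    (hh : ∀ i (θ θ' : ∀ j, Θ j), (∀ j, j ≠ i → θ j = θ' j) → h i θ = h i θ')
    (t : ι → (∀ j, Θ j) → ℝ)
    (ht : ∀ i θ, t i θ = (∑ j ∈ Finset.univ.erase i, v j (f θ) (θ j)) + h i θ) :
    ∀ (θ : ∀ i, Θ i) (i : ι) (θi' : Θ i),
      v i (f θ) (θ i) + t i θ ≥
        v i (f (Function.update θ i θi')) (θ i) + t i (Function.update θ i θi') := by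
  intro θ i θi'
  have truthful := groves_utility_eq_welfare_add v f h hh t ht θ i (θ i)
  rw [update_eq_self] at truthful
  rw [truthful, groves_utility_eq_welfare_add v f h hh t ht]
  exact add_le_add_left (heff θ _) _

/-- Groves' theorem: for a decision problem with an efficient decision rule,
every Groves mechanism is incentive compatible. -/
theorem stmt16 {ι : Type*} [Fintype ι] [DecidableEq ι] {D : Type*} [Nonempty D]
    {Θ : ι → Type*} [∀ i, Nonempty (Θ i)]
    (v : ∀ i, D → Θ i → ℝ) (f : (∀ i, Θ i) → D)
    (heff : ∀ (θ : ∀ i, Θ i) (d' : D),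
      ∑ i, v i (f θ) (θ i) ≥ ∑ i, v i d' (θ i))
    (h : ∀ _ : ι, (∀ j, Θ j) → ℝ)
    (hh : ∀ i (θ θ' : ∀ j, Θ j), (∀ j, j ≠ i → θ j = θ' j) → h i θ = h i θ')
    (t : ι → (∀ j, Θ j) → ℝ)
    (ht : ∀ i θ, t i θ = (∑ j ∈ Finset.univ.erase i, v j (f θ) (θ j)) + h i θ) :
    ∀ (θ : ∀ i, Θ i) (i : ι) (θi' : Θ i),
      v i (f θ) (θ i) + t i θ ≥
        v i (f (Function.update θ i θi')) (θ i) + t i (Function.update θ i θi') :=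
  stmt16_general v f heff h hh t ht
end

section
/- In the pivotal mechanism for the sealed-bid auction, the winner (the least-index player with the maximal bid) pays the second-highest bid: t_i(θ) = -θ*_2 if i = argsmax θ, and t_i(θ) = 0 otherwise, where θ*_2 is the second largest value among θ_1,...,θ_n. -/
/-!
Removing player `i` from the auction replaces `θ` by `Function.update θ i 0`: the others' total
value of decision `d` is `θ d` unless `d = i`. For the winner `i₀` the chosen decision then
contributes nothing, while the best alternative is worth the highest losing bid; for a loser `i`
both the chosen decision and the best alternative are worth `θ i₀`.
-/

open Finset Function

lemma sum_erase_ite_eq_update {ι : Type*} [Fintype ι] [DecidableEq ι] (θ : ι → ℝ) (i d : ι) :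
    ∑ j ∈ univ.erase i, (if d = j then θ j else 0) = update θ i 0 d := by
  rw [sum_ite_eq, update_apply]
  by_cases h : d = i <;> simp [h]

section iSup_update

variable {ι : Type*} [Finite ι] [DecidableEq ι] {g : ι → ℝ}

lemma iSup_update_zero_eq_iSup_ne (hg : ∀ j, 0 ≤ g j) (i : ι) :
    ⨆ d, update g i 0 d = ⨆ j : {j // j ≠ i}, g j := by
  have hbdd : BddAbove (Set.range fun j : {j // j ≠ i} => g j) := (Set.finite_range _).bddAbove
  apply le_antisymm
  · refine Real.iSup_le (fun d => ?_) (Real.iSup_nonneg fun j => hg j)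
    by_cases h : d = i
    · simpa [h] using Real.iSup_nonneg fun j : {j // j ≠ i} => hg j
    · simpa [h] using le_ciSup hbdd ⟨d, h⟩
  · have hupd_nonneg : ∀ d, 0 ≤ update g i 0 d := fun d => by
      by_cases h : d = i <;> simp [h, hg d]
    refine Real.iSup_le (fun ⟨j, hj⟩ => ?_) (Real.iSup_nonneg hupd_nonneg)
    simpa [hj] using le_ciSup (Set.finite_range (update g i 0)).bddAbove j

lemma iSup_update_zero_eq_of_ne {i i₀ : ι} (hi : i ≠ i₀) (hg : ∀ j, 0 ≤ g j)
    (hmax : ∀ j, g j ≤ g i₀) : ⨆ d, update g i 0 d = g i₀ := by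
  apply le_antisymm
  · refine Real.iSup_le (fun d => ?_) (hg i₀)
    by_cases h : d = i <;> simp [h, hg i₀, hmax d]
  · simpa [hi.symm] using le_ciSup (Set.finite_range (update g i 0)).bddAbove i₀

end iSup_update

theorem stmt18_general (n : ℕ) (θ : Fin n → ℝ) (hθ : ∀ i, 0 ≤ θ i)
    (v : Fin n → Fin n → ℝ → ℝ)
    (hv : ∀ i d x, v i d x = if d = i then x else 0)
    (i₀ : Fin n) (hmax : ∀ j, θ j ≤ θ i₀)
    (f : (Fin n → ℝ) → Fin n) (hf : f θ = i₀)
    (t : Fin n → ℝ)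
    (ht : ∀ i, t i = (∑ j ∈ Finset.univ.erase i, v j (f θ) (θ j)) -
      ⨆ d : Fin n, ∑ j ∈ Finset.univ.erase i, v j d (θ j)) :
    t i₀ = -(⨆ j : {j : Fin n // j ≠ i₀}, θ j.1) ∧ ∀ i, i ≠ i₀ → t i = 0 := by
  have hothers : ∀ i d, ∑ j ∈ univ.erase i, v j d (θ j) = update θ i 0 d := fun i d => by
    simp only [hv, sum_erase_ite_eq_update]
  simp only [ht, hf, hothers]
  refine ⟨?_, fun i hi => ?_⟩
  · rw [iSup_update_zero_eq_iSup_ne hθ, update_self, zero_sub]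
  · rw [iSup_update_zero_eq_of_ne hi hθ hmax, update_of_ne hi.symm, sub_self]

/-- In the pivotal mechanism for the sealed-bid auction, the winner (the least-index
player with a maximal bid) pays the second-highest bid, and all other players pay
nothing. -/
theorem stmt18 (n : ℕ) (hn : 1 < n) (θ : Fin n → ℝ) (hθ : ∀ i, 0 ≤ θ i)
    (v : Fin n → Fin n → ℝ → ℝ)
    (hv : ∀ i d x, v i d x = if d = i then x else 0)
    (i₀ : Fin n) (hmax : ∀ j, θ j ≤ θ i₀) (hleast : ∀ j, j < i₀ → θ j < θ i₀)
    (f : (Fin n → ℝ) → Fin n) (hf : f θ = i₀)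
    (t : Fin n → ℝ)
    (ht : ∀ i, t i = (∑ j ∈ Finset.univ.erase i, v j (f θ) (θ j)) -
      ⨆ d : Fin n, ∑ j ∈ Finset.univ.erase i, v j d (θ j)) :
    t i₀ = -(⨆ j : {j : Fin n // j ≠ i₀}, θ j.1) ∧ ∀ i, i ≠ i₀ → t i = 0 :=
  stmt18_general n θ hθ v hv i₀ hmax f hf t ht
end
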